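/- Let A be an ε-differentially private randomized algorithm with domain 𝒳^n and finite range 𝒴, let 𝒫 be a distribution over 𝒳, and let S be a random dataset drawn from the product distribution 𝒫^n. Let Y = A(S). Assume that for each element y ∈ 𝒴 there is a subset R(y) ⊆ 𝒳^n such that max_{y∈𝒴} Pr[S ∈ R(y)] ≤ β. Then, for ε ≤ √( ln(1/β) / (2n) ), we have Pr[ S ∈ R(Y) ] ≤ 3√β. -/

import Mathlib

open scoped ENNReal

/-- Probability of an event under a PMF. -/
noncomputable def pr {Z : Type*} (p : PMF Z) (O : Set Z) : ℝ≥0∞ :=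
  p.toOuterMeasure O

/-- Joint distribution of (input, output). -/
noncomputable def joint {A B : Type*} (μ : PMF A) (f : A → PMF B) : PMF (A × B) :=
  μ.bind fun a => (f a).map fun b => (a, b)

/-- Two datasets are adjacent if they differ in a single element. -/
def Adjacent {X : Type*} {n : ℕ} (S S' : Fin n → X) : Prop :=
  ∃ i : Fin n, ∀ j : Fin n, j ≠ i → S j = S' j

/-- ε-differential privacy: for all adjacent datasets `S, S'` and every output `y`,
`Pr[A(S) = y] ≤ e^ε · Pr[A(S') = y]`. -/
def DiffPrivate {X Y : Type*} {n : ℕ} (A : (Fin n → X) → PMF Y) (ε : ℝ) : Prop :=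
  ∀ S S' : Fin n → X, Adjacent S S' → ∀ y : Y,
    A S y ≤ ENNReal.ofReal (Real.exp ε) * A S' y

/-- The distribution of `n` i.i.d. samples from `P`. -/
noncomputable def iid {X : Type*} (P : PMF X) : (n : ℕ) → PMF (Fin n → X)
  | 0 => PMF.pure fun i => i.elim0
  | n + 1 => (iid P n).bind fun S => P.map fun x => Fin.cons x S

/-!
For a fixed output `y`, the map `S ↦ Pr[A(S) = y]` changes by a factor at most `e^ε` when one
coordinate of `S` changes. Applying Hoeffding's lemma to its logarithm one coordinate at a time
bounds its fourth moment under `𝒫^n` by `e^{2nε²}` times the fourth power of its mean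
`Pr[Y = y]`, and the choice of `ε` makes `e^{2nε²} ≤ 1/β`. Comparing `Pr[A(S) = y]` with the
threshold `u = Pr[Y = y]/√β` through `a ≤ u + a⁴/u³` then gives
`Pr[S ∈ R(Y)] ≤ √β + e^{2nε²} β^{3/2} ≤ 2√β`.
-/

open Real MeasureTheory ProbabilityTheory

theorem pr_le_one {Z : Type*} (p : PMF Z) (O : Set Z) : pr p O ≤ 1 :=
  (measure_mono (Set.subset_univ O)).trans_eq
    (p.toOuterMeasure_apply_eq_one_iff _ |>.2 (Set.subset_univ _))

theorem toReal_pr {Z : Type*} [Fintype Z] (p : PMF Z) (O : Set Z) :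
    (pr p O).toReal = ∑ z, O.indicator (fun z => (p z).toReal) z := by
  rw [pr, p.toOuterMeasure_apply_fintype, ENNReal.toReal_sum fun z _ => ?_]
  · exact Finset.sum_congr rfl fun z _ => by by_cases h : z ∈ O <;> simp [h]
  · exact (Set.indicator_le_self O p z).trans_lt (p.apply_lt_top z) |>.ne

theorem PMF.sum_toReal {Z : Type*} [Fintype Z] (p : PMF Z) : ∑ z, (p z).toReal = 1 := by
  have h := p.tsum_coe
  rw [tsum_fintype] at h
  rw [← ENNReal.toReal_sum fun z _ => p.apply_ne_top z, h, ENNReal.toReal_one]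

theorem joint_apply {A B : Type*} (μ : PMF A) (f : A → PMF B) (a : A) (b : B) :
    joint μ f (a, b) = μ a * f a b := by
  classical
  rw [joint, PMF.bind_apply, tsum_eq_single a]
  · simp [PMF.map_apply, @eq_comm _ b]
  · intro a' ha'
    simp [PMF.map_apply, Ne.symm ha']

theorem toReal_pr_joint {A B : Type*} [Fintype A] [Fintype B] (μ : PMF A) (f : A → PMF B)
    (R : B → Set A) :
    (pr (joint μ f) {p | p.1 ∈ R p.2}).toReal =
      ∑ b, ∑ a, (R b).indicator (fun a => (μ a).toReal) a * (f a b).toReal := by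
  rw [toReal_pr, Fintype.sum_prod_type_right]
  refine Finset.sum_congr rfl fun b _ => Finset.sum_congr rfl fun a _ => ?_
  by_cases h : a ∈ R b <;> simp [h, joint_apply]

theorem sum_sum_toReal_mul_eq_one {A B : Type*} [Fintype A] [Fintype B] (μ : PMF A)
    (f : A → PMF B) : ∑ b, ∑ a, (μ a).toReal * (f a b).toReal = 1 := by
  rw [Finset.sum_comm]
  simp [← Finset.mul_sum, PMF.sum_toReal]

theorem Adjacent.cons {X : Type*} {n : ℕ} (x : X) {S S' : Fin n → X} (h : Adjacent S S') :
    Adjacent (Fin.cons x S : Fin (n + 1) → X) (Fin.cons x S') := by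
  obtain ⟨i, hi⟩ := h
  refine ⟨i.succ, Fin.cases (fun _ => rfl) fun j hj => hi j ?_⟩
  exact fun h => hj (congrArg Fin.succ h)

theorem adjacent_cons_cons {X : Type*} {n : ℕ} (x x' : X) (S : Fin n → X) :
    Adjacent (Fin.cons x S : Fin (n + 1) → X) (Fin.cons x' S) :=
  ⟨0, Fin.cases (fun h => absurd rfl h) fun _ _ => rfl⟩

theorem DiffPrivate.mono {X Y : Type*} {n : ℕ} {A : (Fin n → X) → PMF Y} {ε ε' : ℝ}
    (hA : DiffPrivate A ε) (h : ε ≤ ε') : DiffPrivate A ε' := fun S S' hS y =>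
  (hA S S' hS y).trans (by gcongr)

theorem DiffPrivate.toReal_le {X Y : Type*} {n : ℕ} {A : (Fin n → X) → PMF Y} {ε : ℝ}
    (hA : DiffPrivate A ε) (y : Y) {S S' : Fin n → X} (h : Adjacent S S') :
    (A S y).toReal ≤ exp ε * (A S' y).toReal := by
  simpa [ENNReal.toReal_mul, (exp_pos ε).le] using
    ENNReal.toReal_mono (ENNReal.mul_ne_top ENNReal.ofReal_ne_top (PMF.apply_ne_top _ _))
      (hA S S' h y)

theorem iid_succ_apply_cons {X : Type*} (P : PMF X) (n : ℕ) (x : X) (S : Fin n → X) :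
    iid P (n + 1) (Fin.cons x S) = P x * iid P n S := by
  classical
  simp [iid, PMF.bind_apply, PMF.map_apply, Fin.cons_inj, ite_and, mul_comm]

theorem sum_iid_succ_toReal_mul {X : Type*} [Fintype X] (P : PMF X) (n : ℕ)
    (f : (Fin (n + 1) → X) → ℝ) :
    ∑ S, (iid P (n + 1) S).toReal * f S =
      ∑ x, (P x).toReal * ∑ S, (iid P n S).toReal * f (Fin.cons x S) := by
  rw [← (Fin.consEquiv fun _ => X).sum_comp, Fintype.sum_prod_type]
  change ∑ x, ∑ S : Fin n → X, (iid P (n + 1) (Fin.cons x S)).toReal * f (Fin.cons x S) = _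
  simp [iid_succ_apply_cons, Finset.mul_sum, mul_assoc]

theorem integral_pow_four_le_of_mem_Icc {Ω : Type*} [MeasurableSpace Ω] {μ : Measure Ω}
    [IsProbabilityMeasure μ] {g : Ω → ℝ} (hg : AEMeasurable g μ) {c ε : ℝ} (hc : 0 < c)
    (hbd : ∀ᵐ ω ∂μ, g ω ∈ Set.Icc c (exp ε * c)) :
    ∫ ω, g ω ^ 4 ∂μ ≤ exp (2 * ε ^ 2) * (∫ ω, g ω ∂μ) ^ 4 := by
  set h : Ω → ℝ := fun ω => log (g ω)
  have hh : AEMeasurable h μ := hg.log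
  have hg_pos : ∀ᵐ ω ∂μ, 0 < g ω := by
    filter_upwards [hbd] with ω hω using hc.trans_le hω.1
  have h_bd : ∀ᵐ ω ∂μ, h ω ∈ Set.Icc (log c) (log c + ε) := by
    filter_upwards [hbd] with ω hω
    refine ⟨log_le_log hc hω.1, ?_⟩
    calc h ω ≤ log (exp ε * c) := log_le_log (hc.trans_le hω.1) hω.2
      _ = log c + ε := by rw [log_mul (exp_pos ε).ne' hc.ne', log_exp, add_comm]
  have h_int : Integrable h μ := Integrable.of_mem_Icc _ _ hh h_bd
  -- Hoeffding's lemma at `t = 4`: `log g` ranges over an interval of length `ε`,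
  -- and `(ε / 2) ^ 2 * 4 ^ 2 / 2 = 2 * ε ^ 2`.
  have hoeffding : ∫ ω, exp (4 * (h ω - ∫ ω, h ω ∂μ)) ∂μ ≤ exp (2 * ε ^ 2) := by
    refine ((hasSubgaussianMGF_of_mem_Icc hh h_bd).mgf_le 4).trans_eq ?_
    congr 1
    simp only [add_sub_cancel_left, NNReal.coe_pow, NNReal.coe_div, coe_nnnorm, norm_eq_abs,
      NNReal.coe_ofNat, div_pow, sq_abs]
    ring
  have jensen : exp (∫ ω, h ω ∂μ) ≤ ∫ ω, g ω ∂μ := by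
    have hexp : (fun ω => exp (h ω)) =ᵐ[μ] g := by
      filter_upwards [hg_pos] with ω hω using exp_log hω
    rw [← integral_congr_ae hexp]
    exact convexOn_exp.map_integral_le continuous_exp.continuousOn isClosed_univ
      (ae_of_all _ fun _ => Set.mem_univ _) h_int
      ((integrable_congr hexp).2 (Integrable.of_mem_Icc _ _ hg hbd))
  have hpow : (fun ω => g ω ^ 4) =ᵐ[μ]
      fun ω => exp (∫ ω, h ω ∂μ) ^ 4 * exp (4 * (h ω - ∫ ω, h ω ∂μ)) := by
    filter_upwards [hg_pos] with ω hω
    rw [← exp_log hω, ← exp_nat_mul, ← exp_nat_mul, ← exp_add]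
    simp only [h]
    push_cast
    ring_nf
  rw [integral_congr_ae hpow, integral_const_mul, mul_comm (exp _)]
  gcongr

theorem PMF.sum_toReal_mul_pow_four_le {X : Type*} [Fintype X] (P : PMF X) {g : X → ℝ}
    {ε : ℝ}    (hg : ∀ x, 0 ≤ g x) (hratio : ∀ x x', g x ≤ exp ε * g x') :
    ∑ x, (P x).toReal * g x ^ 4 ≤ exp (2 * ε ^ 2) * (∑ x, (P x).toReal * g x) ^ 4 := by
  obtain ⟨x₁, -⟩ := P.support_nonempty
  obtain ⟨x₀, -, hx₀⟩ := Finset.univ.exists_min_image g ⟨x₁, Finset.mem_univ x₁⟩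
  rcases (hg x₀).eq_or_lt with hzero | hpos
  · have : ∀ x, g x = 0 := fun x =>
      le_antisymm (by simpa [← hzero] using hratio x x₀) (hg x)
    simp [this]
  let _ : MeasurableSpace X := ⊤
  have hbd : ∀ x, g x ∈ Set.Icc (g x₀) (exp ε * g x₀) :=
    fun x => ⟨hx₀ x (Finset.mem_univ x), hratio x x₀⟩
  simpa [PMF.integral_eq_sum] using integral_pow_four_le_of_mem_Icc (μ := P.toMeasure)
    measurable_from_top.aemeasurable hpos (ae_of_all _ hbd)

theorem sum_iid_toReal_mul_pow_four_le {X : Type*} [Fintype X] (P : PMF X) (ε : ℝ) (n : ℕ)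
    (f : (Fin n → X) → ℝ) (hf : ∀ S, 0 ≤ f S)
    (hdp : ∀ S S', Adjacent S S' → f S ≤ exp ε * f S') :
    ∑ S, (iid P n S).toReal * f S ^ 4 ≤
      exp (2 * n * ε ^ 2) * (∑ S, (iid P n S).toReal * f S) ^ 4 := by
  induction n with
  | zero => simp [iid, Subsingleton.elim _ (default : Fin 0 → X)]
  | succ n ih =>
    set g : X → ℝ := fun x => ∑ S, (iid P n S).toReal * f (Fin.cons x S)
    have hg : ∀ x, 0 ≤ g x := fun x =>
      Finset.sum_nonneg fun S _ => mul_nonneg ENNReal.toReal_nonneg (hf _)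
    have hratio : ∀ x x', g x ≤ exp ε * g x' := fun x x' => by
      simp only [g, Finset.mul_sum]
      refine Finset.sum_le_sum fun S _ => ?_
      rw [mul_left_comm]
      gcongr
      exact hdp _ _ (adjacent_cons_cons x x' S)
    rw [sum_iid_succ_toReal_mul, sum_iid_succ_toReal_mul]
    calc ∑ x, (P x).toReal * ∑ S, (iid P n S).toReal * f (Fin.cons x S) ^ 4
        ≤ ∑ x, (P x).toReal * (exp (2 * n * ε ^ 2) * g x ^ 4) := by
          gcongr with x
          exact ih _ (fun S => hf _) fun S S' h => hdp _ _ (h.cons x)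
      _ = exp (2 * n * ε ^ 2) * ∑ x, (P x).toReal * g x ^ 4 := by
          rw [Finset.mul_sum]
          exact Finset.sum_congr rfl fun x _ => by ring
      _ ≤ exp (2 * n * ε ^ 2) * (exp (2 * ε ^ 2) * (∑ x, (P x).toReal * g x) ^ 4) := by
          gcongr
          exact P.sum_toReal_mul_pow_four_le hg hratio
      _ = exp (2 * ↑(n + 1) * ε ^ 2) * (∑ x, (P x).toReal * g x) ^ 4 := by
          rw [← mul_assoc, ← exp_add]
          push_cast
          ring_nf

theorem le_add_pow_four_div_pow_three {a u : ℝ} (ha : 0 ≤ a) (hu : 0 < u) :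
    a ≤ u + a ^ 4 / u ^ 3 := by
  rcases le_total a u with h | h
  · linarith [show 0 ≤ a ^ 4 / u ^ 3 by positivity]
  · have h4 : a * u ^ 3 ≤ a ^ 4 := by
      simpa [pow_succ'] using mul_le_mul_of_nonneg_left (pow_le_pow_left₀ hu.le h 3) ha
    linarith [(le_div_iff₀ (pow_pos hu 3)).2 h4]

theorem sum_indicator_mul_le_of_pow_four {Ω : Type*} [Fintype Ω] {m a : Ω → ℝ} {s : Set Ω}
    {β C K : ℝ} (hm : ∀ ω, 0 ≤ m ω) (ha : ∀ ω, 0 ≤ a ω) (hK : 0 < K)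
    (hs : ∑ ω, s.indicator m ω ≤ β) (hmom : ∑ ω, m ω * a ω ^ 4 ≤ C * (∑ ω, m ω * a ω) ^ 4) :
    ∑ ω, s.indicator m ω * a ω ≤ (K * β + C / K ^ 3) * ∑ ω, m ω * a ω := by
  have hind : ∀ ω, 0 ≤ s.indicator m ω := fun ω => Set.indicator_nonneg (fun ω _ => hm ω) ω
  have hind_le : ∀ ω, s.indicator m ω ≤ m ω :=
    fun ω => Set.indicator_le_self' (fun ω _ => hm ω) ω
  have hle : ∑ ω, s.indicator m ω * a ω ≤ ∑ ω, m ω * a ω :=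
    Finset.sum_le_sum fun ω _ => mul_le_mul_of_nonneg_right (hind_le ω) (ha ω)
  have hq0 : 0 ≤ ∑ ω, m ω * a ω := Finset.sum_nonneg fun ω _ => mul_nonneg (hm ω) (ha ω)
  generalize ∑ ω, m ω * a ω = q at hle hq0 hmom ⊢
  rcases hq0.eq_or_lt with rfl | hq
  · simpa using hle
  have hu : 0 < K * q := mul_pos hK hq
  calc ∑ ω, s.indicator m ω * a ω
      ≤ ∑ ω, s.indicator m ω * (K * q + a ω ^ 4 / (K * q) ^ 3) := by
        gcongr with ω
        · exact hind ω
        · exact le_add_pow_four_div_pow_three (ha ω) hu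
    _ = K * q * ∑ ω, s.indicator m ω
          + (∑ ω, s.indicator m ω * a ω ^ 4) / (K * q) ^ 3 := by
        rw [Finset.mul_sum, Finset.sum_div, ← Finset.sum_add_distrib]
        exact Finset.sum_congr rfl fun ω _ => by ring
    _ ≤ K * q * β + (∑ ω, m ω * a ω ^ 4) / (K * q) ^ 3 := by
        gcongr with ω
        exact hind_le ω
    _ ≤ K * q * β + C * q ^ 4 / (K * q) ^ 3 := by gcongr
    _ = (K * β + C / K ^ 3) * q := by field_simp

theorem exp_two_mul_sq_mul_le_one {β ε : ℝ} {n : ℕ} (hβ : 0 < β) (hβ1 : β ≤ 1)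
    (hε0 : 0 ≤ ε) (hε : ε ≤ √(log (1 / β) / (2 * n))) : exp (2 * n * ε ^ 2) * β ≤ 1 := by
  have hL : 0 ≤ log (1 / β) := log_nonneg (one_le_one_div hβ hβ1)
  have hexp : 2 * n * ε ^ 2 ≤ log (1 / β) := by
    rcases n.eq_zero_or_pos with rfl | hn
    · simpa using hL
    have := (Real.le_sqrt hε0 (by positivity)).1 hε
    rw [le_div_iff₀ (by positivity)] at this
    linarith
  calc exp (2 * n * ε ^ 2) * β ≤ exp (log (1 / β)) * β := by gcongr
    _ = 1 := by rw [exp_log (by positivity)]; field_simp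

/-- let `A` be ε-differentially private, `S ∼ 𝒫^n` i.i.d., and
`Y = A(S)`. If `Pr[S ∈ R(y)] ≤ β` for every fixed `y ∈ 𝒴`, then for
`ε ≤ √(ln(1/β) / (2n))`, `Pr[S ∈ R(Y)] ≤ 3√β`. -/
theorem pure_dp_iid_bad_event_bound
    {X Y : Type*} [Fintype X] [Fintype Y] {n : ℕ}
    (P : PMF X) (A : (Fin n → X) → PMF Y) (ε : ℝ) (hA : DiffPrivate A ε)
    (R : Y → Set (Fin n → X)) (β : ℝ) (hβ : 0 < β)
    (hR : ∀ y : Y, pr (iid P n) (R y) ≤ ENNReal.ofReal β)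
    (hε : ε ≤ Real.sqrt (Real.log (1 / β) / (2 * n))) :
    pr (joint (iid P n) A) {p : (Fin n → X) × Y | p.1 ∈ R p.2}
      ≤ ENNReal.ofReal (3 * Real.sqrt β) := by
  rcases le_or_gt 1 β with hβ1 | hβ1
  · refine (pr_le_one _ _).trans (ENNReal.one_le_ofReal.2 ?_)
    linarith [Real.one_le_sqrt.2 hβ1]
  set m : (Fin n → X) → ℝ := fun S => (iid P n S).toReal
  -- `hε` does not bound `ε ^ 2` when `ε < 0`, so privacy is used at level `max ε 0`.
  set C := exp (2 * n * max ε 0 ^ 2)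
  have hmom : ∀ y, ∑ S, m S * (A S y).toReal ^ 4 ≤ C * (∑ S, m S * (A S y).toReal) ^ 4 :=
    fun y => sum_iid_toReal_mul_pow_four_le P _ n _ (fun _ => ENNReal.toReal_nonneg)
      fun _ _ h => (hA.mono (le_max_left ε 0)).toReal_le y h
  have hCβ : C * β ≤ 1 :=
    exp_two_mul_sq_mul_le_one hβ hβ1.le (le_max_right ε 0) (max_le hε (sqrt_nonneg _))
  have hRy : ∀ y, ∑ S, (R y).indicator m S ≤ β := fun y => by
    rw [← toReal_pr]
    exact ENNReal.toReal_le_of_le_ofReal hβ.le (hR y)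
  have hsqrt : 0 < √β := sqrt_pos.2 hβ
  rw [ENNReal.le_ofReal_iff_toReal_le ((pr_le_one _ _).trans_lt ENNReal.one_lt_top).ne
    (by positivity), toReal_pr_joint]
  calc ∑ y, ∑ S, (R y).indicator m S * (A S y).toReal
      ≤ ∑ y, ((√β)⁻¹ * β + C / (√β)⁻¹ ^ 3) * ∑ S, m S * (A S y).toReal :=
        Finset.sum_le_sum fun y _ => sum_indicator_mul_le_of_pow_four
          (fun _ => ENNReal.toReal_nonneg) (fun _ => ENNReal.toReal_nonneg) (inv_pos.2 hsqrt)
          (hRy y) (hmom y)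
    _ = √β + C * β * √β := by
        rw [← Finset.mul_sum, sum_sum_toReal_mul_eq_one, mul_one, inv_mul_eq_div, div_sqrt,
          inv_pow, div_inv_eq_mul, pow_succ, sq_sqrt hβ.le]
        ring
    _ ≤ 3 * √β := by nlinarith
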